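/- An object of the category HAsm of Herbrand assemblies over K₁ is projective with respect to regular epimorphisms if and only if it is isomorphic to a partitioned Herbrand assembly. -/

import Mathlib

open CategoryTheory Encodable Denumerable

namespace Herbrand

/-- Kleene application in Kleene's first pca `K₁`: `e · n`. -/
def kap (e n : ℕ) : Part ℕ := Nat.Partrec.Code.eval (ofNat Nat.Partrec.Code e) n

/-- `kapIn r n S` : `r · n` is defined and its value lies in `S`. -/
def kapIn (r n : ℕ) (S : Set ℕ) : Prop := ∃ v ∈ kap r n, v ∈ S

/-- The list coded by a natural number (canonical bijection `ℕ ≃ List ℕ`). -/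
def toL (n : ℕ) : List ℕ := ofNat (List ℕ) n

/-- The code of a list of natural numbers. -/
def ofL (l : List ℕ) : ℕ := encode l

@[simp] lemma toL_ofL (l : List ℕ) : toL (ofL l) = l := ofNat_encode l

/-- `!A` : the set of codes of lists all of whose entries lie in `A`. -/
def bang (A : Set ℕ) : Set ℕ := {n | ∀ x ∈ toL n, x ∈ A}

/-- `m ⪯ n` : every entry of the list coded by `m` is an entry of the list coded by `n`. -/
def sle (m n : ℕ) : Prop := ∀ x ∈ toL m, x ∈ toL n

lemma sle_refl (m : ℕ) : sle m m := fun _ hx => hx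

lemma sle_trans {m n k : ℕ} (h1 : sle m n) (h2 : sle n k) : sle m k :=
  fun x hx => h2 x (h1 x hx)

/-- `S` is upward closed in `!A`. -/
def UpwardClosedIn (A S : Set ℕ) : Prop :=
  ∀ m ∈ S, ∀ n ∈ bang A, sle m n → n ∈ S

/-- `↑_{!A} S` : the set of `n ∈ !A` with `m ⪯ n` for some `m ∈ S`. -/
def upClo (A S : Set ℕ) : Set ℕ := {n | n ∈ bang A ∧ ∃ m ∈ S, sle m n}

lemma mem_bang_univ (n : ℕ) : n ∈ bang Set.univ := fun x _ => Set.mem_univ x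

/-- From a partial recursive function we get a `K₁`-code for it. -/
theorem exists_kap_eq {f : ℕ →. ℕ} (hf : Nat.Partrec f) : ∃ e, ∀ n, kap e n = f n := by
  obtain ⟨c, hc⟩ := Nat.Partrec.Code.exists_code.mp hf
  exact ⟨encode c, fun n => by simp [kap, hc]⟩


/-- A Herbrand assembly over `K₁`. -/
structure HAsmObj where
  carrier : Type
  real : Set ℕ
  rz : carrier → Set ℕ
  rz_sub : ∀ a, rz a ⊆ bang real
  rz_ne : ∀ a, (rz a).Nonempty
  rz_up : ∀ a, UpwardClosedIn real (rz a)

/-- `r ∈ ℕ` tracks the function `f` between the underlying sets of two Herbrand assemblies. -/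
def Tracks (B A : HAsmObj) (f : B.carrier → A.carrier) (r : ℕ) : Prop :=
  (∀ m ∈ bang B.real, kapIn r m (bang A.real)) ∧
  ∀ b : B.carrier, ∀ m ∈ B.rz b, kapIn r m (A.rz (f b))

/-- A morphism of Herbrand assemblies: a tracked function. -/
structure HHom (B A : HAsmObj) where
  toFun : B.carrier → A.carrier
  tracked : ∃ r, Tracks B A toFun r

theorem HHom.ext' {B A : HAsmObj} {f g : HHom B A} (h : f.toFun = g.toFun) : f = g := by
  cases f; cases g; simpa using h

theorem tracks_id_fun (B A : HAsmObj) (f : B.carrier → A.carrier)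
    (h1 : ∀ m ∈ bang B.real, m ∈ bang A.real)
    (h2 : ∀ b : B.carrier, ∀ m ∈ B.rz b, m ∈ A.rz (f b)) : ∃ r, Tracks B A f r := by
  obtain ⟨e, he⟩ := exists_kap_eq (Nat.Partrec.of_primrec Nat.Primrec.id)
  exact ⟨e, fun m hm => ⟨m, by simp [he], h1 m hm⟩,
    fun b m hm => ⟨m, by simp [he], h2 b m hm⟩⟩

theorem tracked_id (A : HAsmObj) : ∃ r, Tracks A A id r :=
  tracks_id_fun A A id (fun _ h => h) (fun _ _ h => h)

theorem tracked_comp {C B A : HAsmObj} {f : C.carrier → B.carrier} {g : B.carrier → A.carrier}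
    (hf : ∃ r, Tracks C B f r) (hg : ∃ s, Tracks B A g s) : ∃ t, Tracks C A (g ∘ f) t := by
  obtain ⟨r, hr1, hr2⟩ := hf
  obtain ⟨s, hs1, hs2⟩ := hg
  refine ⟨encode (Nat.Partrec.Code.comp (ofNat Nat.Partrec.Code s) (ofNat Nat.Partrec.Code r)),
    ?_, ?_⟩
  · intro m hm
    obtain ⟨v, hv, hv'⟩ := hr1 m hm
    obtain ⟨w, hw, hw'⟩ := hs1 v hv'
    exact ⟨w, by simp only [kap, Denumerable.ofNat_encode, Nat.Partrec.Code.eval]; exact Part.mem_bind_iff.mpr ⟨v, hv, hw⟩, hw'⟩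
  · intro c m hm
    obtain ⟨v, hv, hv'⟩ := hr2 c m hm
    obtain ⟨w, hw, hw'⟩ := hs2 (f c) v hv'
    exact ⟨w, by simp only [kap, Denumerable.ofNat_encode, Nat.Partrec.Code.eval]; exact Part.mem_bind_iff.mpr ⟨v, hv, hw⟩, hw'⟩

/-- The category `HAsm` of Herbrand assemblies over `K₁`. -/
instance : Category HAsmObj where
  Hom B A := HHom B A
  id A := ⟨id, tracked_id A⟩
  comp f g := ⟨g.toFun ∘ f.toFun, tracked_comp f.tracked g.tracked⟩
  id_comp f := HHom.ext' rfl
  comp_id f := HHom.ext' rfl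
  assoc f g h := HHom.ext' rfl


/-- The Herbrand assembly `∇X = (X, ℕ, x ↦ !ℕ)`. -/
def nablaObj (X : Type) : HAsmObj where
  carrier := X
  real := Set.univ
  rz _ := bang Set.univ
  rz_sub _ := fun _ h => h
  rz_ne _ := ⟨0, mem_bang_univ 0⟩
  rz_up _ := fun _ _ n hn _ => hn

/-- The functor `∇ : Set → HAsm`. -/
def Nabla : Type ⥤ HAsmObj where
  obj := nablaObj
  map f := ⟨f, tracks_id_fun _ _ f (fun _ h => h) (fun _ _ h => h)⟩
  map_id _ := HHom.ext' rfl
  map_comp _ _ := HHom.ext' rfl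

/-- The underlying-set functor `Γ : HAsm → Set`. -/
def Gamma : HAsmObj ⥤ Type where
  obj A := A.carrier
  map f := TypeCat.ofHom f.toFun

/-- The realizability structure of the natural numbers object: `ν n = ↑_{!ℕ} {⟨n⟩}`. -/
def nuN (n : ℕ) : Set ℕ := upClo Set.univ {ofL [n]}

/-- The natural numbers object `N = (ℕ, ℕ, ν)` of `HAsm`. -/
def NObj : HAsmObj where
  carrier := ℕ
  real := Set.univ
  rz := nuN
  rz_sub _ := fun _ hm => hm.1
  rz_ne n := ⟨ofL [n], mem_bang_univ _, ofL [n], rfl, sle_refl _⟩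
  rz_up _ := fun m hm k hk hmk => ⟨hk, hm.2.choose, hm.2.choose_spec.1,
    sle_trans hm.2.choose_spec.2 hmk⟩

/-- The terminal object `1 = ({*}, ℕ, * ↦ !ℕ)` of `HAsm`. -/
def oneObj : HAsmObj := nablaObj PUnit

/-- The zero morphism `0 : 1 ⟶ N`. -/
def zeroH : oneObj ⟶ NObj := by
  refine ⟨fun _ => (0 : ℕ), ?_⟩
  obtain ⟨e, he⟩ := exists_kap_eq (Nat.Partrec.of_primrec (Nat.Primrec.const (ofL [0])))
  exact ⟨e, fun m _ => ⟨ofL [0], by simp [he], mem_bang_univ _⟩,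
    fun b m _ => ⟨ofL [0], by simp [he], mem_bang_univ _, ofL [0], rfl, sle_refl _⟩⟩

/-- The successor morphism `s : N ⟶ N`. -/
def succH : NObj ⟶ NObj := by
  refine ⟨(Nat.succ : ℕ → ℕ), ?_⟩
  have hp : Primrec (fun m : ℕ => ofL ((toL m).map Nat.succ)) :=
    Primrec.encode.comp ((Primrec.ofNat (List ℕ)).list_map
      ((Primrec.succ.comp Primrec.snd).to₂))
  obtain ⟨e, he⟩ := exists_kap_eq (Nat.Partrec.of_primrec (Primrec.nat_iff.mp hp))
  refine ⟨e, fun m _ => ⟨ofL ((toL m).map Nat.succ), by simp [he], mem_bang_univ _⟩, ?_⟩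
  rintro (n : ℕ) m hm
  refine ⟨ofL ((toL m).map Nat.succ), by simp [he], mem_bang_univ _, ofL [n + 1], rfl, ?_⟩
  intro x hx
  have hn : n ∈ toL m := hm.2.choose_spec.2 n (by
    have : hm.2.choose = ofL [n] := hm.2.choose_spec.1
    rw [this]; simp)
  have hx' : x = n + 1 := by simpa using hx
  subst hx'
  simp only [toL_ofL, List.mem_map]
  exact ⟨n, hn, rfl⟩


/-- A partitioned Herbrand assembly. -/
def Partitioned (A : HAsmObj) : Prop :=
  ∀ a : A.carrier, ∃ g : ℕ, A.rz a = upClo A.real {ofL [g]}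

/-!
Regular epimorphisms of `HAsm` are exactly the maps `p` admitting a code `e` that sends every
realizer of `a` to a realizer of some point of the fibre of `p` over `a`. If `p` is regular, it
also coequalizes its pair when the codomain is given the image structure (the realizers of `a`
are those of the points over `a`), and a tracker of the induced identity map is such an `e`.
Conversely, such a `p` is the coequalizer of its kernel pair: a cofork descends by choosing
preimages, tracked by `e` followed by a tracker of the cofork.

A partitioned object is projective because every realizer of `a` contains the generator of `a`:
applying a tracker of `u` and then `e` to each entry and concatenating the results lands above
a realizer of a chosen preimage of `u a`. Conversely every `P` is covered by the partitioned
object of realized points `(a, m)`, generated by `⟨m⟩`, and `m ↦ ⟨m⟩` lifts realizers along the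
projection; a section of it makes `P` isomorphic to a partitioned object.
-/

lemma singleton_mem_bang {A : Set ℕ} {x : ℕ} (hx : x ∈ A) : ofL [x] ∈ bang A := by
  simpa [bang] using hx

lemma sle_singleton_iff {g n : ℕ} : sle (ofL [g]) n ↔ g ∈ toL n := by
  simp [sle]

lemma mem_upClo_singleton {A : Set ℕ} {g n : ℕ} :
    n ∈ upClo A {ofL [g]} ↔ n ∈ bang A ∧ g ∈ toL n := by
  simp [upClo, sle_singleton_iff]

lemma upClo_upwardClosedIn (A S : Set ℕ) : UpwardClosedIn A (upClo A S) := by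
  rintro m ⟨-, m₀, hm₀, hle⟩ n hn hmn
  exact ⟨hn, m₀, hm₀, sle_trans hle hmn⟩

lemma partrec_kap (t : ℕ) : Partrec (kap t) :=
  Partrec.nat_iff.mpr (Nat.Partrec.Code.exists_code.mpr ⟨_, rfl⟩)

lemma computable_ofL_singleton : Computable fun n : ℕ => ofL [n] :=
  (Primrec.encode.comp (Primrec.list_cons.comp Primrec.id (Primrec.const []))).to_comp

lemma exists_kap_comp (e t : ℕ) :
    ∃ c, ∀ {k : ℕ} {S T : Set ℕ}, kapIn e k S → (∀ y ∈ S, kapIn t y T) → kapIn c k T := by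
  have hcomp : Partrec fun n => (kap e n).bind (kap t) :=
    (partrec_kap e).bind ((partrec_kap t).comp Computable.snd)
  obtain ⟨c, hc⟩ := exists_kap_eq (Partrec.nat_iff.mp hcomp)
  refine ⟨c, fun ⟨y, hy, hyS⟩ ht => ?_⟩
  obtain ⟨z, hz, hzT⟩ := ht y hyS
  exact ⟨z, hc _ ▸ Part.mem_bind_iff.mpr ⟨y, hy, hz⟩, hzT⟩

/-- A recursion on the index rather than on the list, so that `Partrec.nat_rec` applies. -/
def concatPrefix (f : ℕ →. ℕ) (l : List ℕ) (k : ℕ) : Part (List ℕ) :=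
  k.rec (Part.some []) fun i IH => IH.bind fun r => (f (l.getD i 0)).map fun z => r ++ toL z

lemma partrec_concatPrefix {f : ℕ →. ℕ} (hf : Partrec f) :
    Partrec fun m => concatPrefix f (toL m) (toL m).length := by
  have hentry : Computable fun q : ℕ × ℕ × List ℕ => (toL q.1).getD q.2.1 0 :=
    (Primrec.list_getD 0 |>.comp ((Primrec.ofNat (List ℕ)).comp Primrec.fst)
      (Primrec.fst.comp Primrec.snd)).to_comp
  have happend : Computable₂ fun (q : ℕ × ℕ × List ℕ) (z : ℕ) => q.2.2 ++ toL z :=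
    (Primrec.list_append.comp (Primrec.snd.comp (Primrec.snd.comp Primrec.fst))
      ((Primrec.ofNat (List ℕ)).comp Primrec.snd)).to_comp
  exact Partrec.nat_rec (Primrec.list_length.comp (Primrec.ofNat (List ℕ))).to_comp
    (Partrec.const' _) ((hf.comp hentry).map happend).to₂

lemma mem_concatPrefix {f : ℕ →. ℕ} {l : List ℕ} (hdom : ∀ x ∈ l, (f x).Dom) :
    ∀ k ≤ l.length, ∃ r ∈ concatPrefix f l k,
      ∀ w, w ∈ r ↔ ∃ x ∈ l.take k, ∃ z ∈ f x, w ∈ toL z := by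
  intro k
  induction k with
  | zero => exact fun _ => ⟨[], Part.mem_some _, by simp⟩
  | succ k IH =>
    intro hk
    obtain ⟨r, hr, hmem⟩ := IH (by omega)
    have hkl : k < l.length := by omega
    have hx : (f l[k]).Dom := hdom _ (List.getElem_mem hkl)
    refine ⟨r ++ toL ((f l[k]).get hx), ?_, fun w => ?_⟩
    · refine Part.mem_bind_iff.mpr ⟨r, hr, (Part.mem_map_iff _).mpr ⟨_, ?_, rfl⟩⟩
      rw [List.getD_eq_getElem _ _ hkl]
      exact Part.get_mem hx
    · simp only [List.take_add_one, List.getElem?_eq_getElem hkl, Option.toList_some,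
        List.mem_append, hmem, List.mem_singleton]
      constructor
      · rintro (⟨x, hx, z, hz, hw⟩ | hw)
        · exact ⟨x, .inl hx, z, hz, hw⟩
        · exact ⟨_, .inr rfl, _, Part.get_mem hx, hw⟩
      · rintro ⟨x, hx' | rfl, z, hz, hw⟩
        · exact .inl ⟨x, hx', z, hz, hw⟩
        · exact .inr (Part.mem_unique (Part.get_mem hx) hz ▸ hw)

lemma exists_kap_concat {f : ℕ →. ℕ} (hf : Partrec f) :
    ∃ d, ∀ (T : Set ℕ) (m : ℕ), (∀ x ∈ toL m, ∃ z ∈ f x, z ∈ bang T) →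
      ∃ v ∈ kap d m, v ∈ bang T ∧ ∀ x ∈ toL m, ∀ z ∈ f x, sle z v := by
  obtain ⟨d, hd⟩ := exists_kap_eq (Partrec.nat_iff.mp ((partrec_concatPrefix hf).map
    (Primrec.encode.comp Primrec.snd).to_comp.to₂))
  refine ⟨d, fun T m hT => ?_⟩
  obtain ⟨r, hr, hmem⟩ := mem_concatPrefix
    (fun x hx => Part.dom_iff_mem.mpr ((hT x hx).imp fun _ hz => hz.1)) _ le_rfl
  simp only [List.take_length] at hmem
  refine ⟨ofL r, hd m ▸ (Part.mem_map_iff _).mpr ⟨r, hr, rfl⟩, fun w hw => ?_,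
    fun x hx z hz w hw => ?_⟩
  · rw [toL_ofL, hmem] at hw
    obtain ⟨x, hx, z, hz, hwz⟩ := hw
    obtain ⟨z', hz', hz'T⟩ := hT x hx
    rw [← Part.mem_unique hz' hz] at hwz
    exact hz'T w hwz
  · rw [toL_ofL, hmem]
    exact ⟨x, hx, z, hz, hw⟩

namespace HAsmObj

lemma inter_rz_nonempty (B : HAsmObj) (b b' : B.carrier) : (B.rz b ∩ B.rz b').Nonempty := by
  obtain ⟨m, hm⟩ := B.rz_ne b
  obtain ⟨m', hm'⟩ := B.rz_ne b'
  have hbang : ofL (toL m ++ toL m') ∈ bang B.real := by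
    intro x hx
    rw [toL_ofL, List.mem_append] at hx
    exact hx.elim (B.rz_sub b hm x) (B.rz_sub b' hm' x)
  exact ⟨_, B.rz_up b m hm _ hbang fun x hx => by simp [hx],
    B.rz_up b' m' hm' _ hbang fun x hx => by simp [hx]⟩

lemma ofL_singleton_mem_rz {A : HAsmObj} {a : A.carrier} {g : ℕ}
    (h : A.rz a = upClo A.real {ofL [g]}) : ofL [g] ∈ A.rz a := by
  obtain ⟨m, hm⟩ := A.rz_ne a
  rw [h, mem_upClo_singleton] at hm ⊢
  exact ⟨singleton_mem_bang (hm.1 g hm.2), by simp⟩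

def comap (C : HAsmObj) {X : Type} (f : X → C.carrier) : HAsmObj where
  carrier := X
  real := C.real
  rz x := C.rz (f x)
  rz_sub x := C.rz_sub (f x)
  rz_ne x := C.rz_ne (f x)
  rz_up x := C.rz_up (f x)

def comapIsoOfSection {C P : HAsmObj} {π : C ⟶ P} {s : P ⟶ C} (hs : s ≫ π = 𝟙 P) :
    P ≅ C.comap s.toFun where
  hom := ⟨id, s.tracked⟩
  inv := by
    refine ⟨id, ?_⟩
    obtain ⟨r, hbang, hrz⟩ := π.tracked
    refine ⟨r, hbang, fun a m hm => ?_⟩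
    have hπs : π.toFun (s.toFun a) = a := congrFun (congrArg HHom.toFun hs) a
    exact hπs ▸ hrz (s.toFun a) m hm
  hom_inv_id := HHom.ext' rfl
  inv_hom_id := HHom.ext' rfl

end HAsmObj

lemma Partitioned.comap {C : HAsmObj} (hC : Partitioned C) {X : Type} (f : X → C.carrier) :
    Partitioned (C.comap f) :=
  fun x => hC (f x)

lemma surjective_of_epi {B A : HAsmObj} (p : B ⟶ A) [Epi p] : Function.Surjective p.toFun := by
  let toNabla (χ : A.carrier → Prop) : A ⟶ nablaObj Prop :=
    ⟨χ, tracks_id_fun _ _ _ (fun m _ => mem_bang_univ m) fun _ m _ => mem_bang_univ m⟩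
  have h : toNabla (fun a => ∃ b, p.toFun b = a) = toNabla fun _ => True :=
    (cancel_epi p).mp (HHom.ext' (funext fun b => eq_true ⟨b, rfl⟩))
  exact fun a => of_eq_true (congrFun (congrArg HHom.toFun h) a)

def LiftsRealizers {B A : HAsmObj} (p : B ⟶ A) (e : ℕ) : Prop :=
  (∀ k ∈ bang A.real, kapIn e k (bang B.real)) ∧
  ∀ a, ∀ k ∈ A.rz a, ∃ b, p.toFun b = a ∧ kapIn e k (B.rz b)

lemma LiftsRealizers.surjective {B A : HAsmObj} {p : B ⟶ A} {e : ℕ} (he : LiftsRealizers p e) :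
    Function.Surjective p.toFun := fun a =>
  let ⟨k, hk⟩ := A.rz_ne a
  (he.2 a k hk).imp fun _ hb => hb.1

def imageObj {B A : HAsmObj} (p : B ⟶ A) (hp : Function.Surjective p.toFun) : HAsmObj where
  carrier := A.carrier
  real := B.real
  rz a := {m | ∃ b, p.toFun b = a ∧ m ∈ B.rz b}
  rz_sub _ := fun _ ⟨b, _, hm⟩ => B.rz_sub b hm
  rz_ne a := let ⟨b, hb⟩ := hp a; (B.rz_ne b).imp fun _ hm => ⟨b, hb, hm⟩
  rz_up _ := fun m ⟨b, hb, hm⟩ n hn hmn => ⟨b, hb, B.rz_up b m hm n hn hmn⟩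

lemma exists_liftsRealizers_of_regularEpi {B A : HAsmObj} {p : B ⟶ A} (hp : RegularEpi p) :
    ∃ e, LiftsRealizers p e := by
  have := RegularEpi.epi p hp
  have hsurj := surjective_of_epi p
  let p' : B ⟶ imageObj p hsurj :=
    ⟨p.toFun, tracks_id_fun _ _ _ (fun _ h => h) fun b _ hm => ⟨b, rfl, hm⟩⟩
  have hw : hp.left ≫ p' = hp.right ≫ p' := HHom.ext' (congrArg (fun f => f.toFun) hp.w)
  let d : A ⟶ imageObj p hsurj := hp.isColimit.desc (Limits.Cofork.ofπ p' hw)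
  have hd : ∀ a, d.toFun a = a := by
    have hfac : p ≫ d = p' := Limits.Cofork.IsColimit.π_desc hp.isColimit
    intro a
    obtain ⟨b, rfl⟩ := hsurj a
    exact congrFun (congrArg HHom.toFun hfac) b
  obtain ⟨e, hbang, hrz⟩ := d.tracked
  refine ⟨e, hbang, fun a k hk => ?_⟩
  obtain ⟨v, hv, b, hb, hvb⟩ := hrz a k hk
  exact ⟨b, hb.trans (hd a), v, hv, hvb⟩

def kernelPairObj {B A : HAsmObj} (p : B ⟶ A) : HAsmObj where
  carrier := {y : B.carrier × B.carrier // p.toFun y.1 = p.toFun y.2}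
  real := B.real
  rz y := B.rz y.1.1 ∩ B.rz y.1.2
  rz_sub _ := Set.inter_subset_left.trans (B.rz_sub _)
  rz_ne _ := B.inter_rz_nonempty _ _
  rz_up _ := fun m hm n hn hmn => ⟨B.rz_up _ m hm.1 n hn hmn, B.rz_up _ m hm.2 n hn hmn⟩

def kernelPairFst {B A : HAsmObj} (p : B ⟶ A) : kernelPairObj p ⟶ B :=
  ⟨fun y => y.1.1, tracks_id_fun _ _ _ (fun _ h => h) fun _ _ h => h.1⟩

def kernelPairSnd {B A : HAsmObj} (p : B ⟶ A) : kernelPairObj p ⟶ B :=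
  ⟨fun y => y.1.2, tracks_id_fun _ _ _ (fun _ h => h) fun _ _ h => h.2⟩

section LiftsRealizers

variable {B A : HAsmObj} {p : B ⟶ A} {e : ℕ}

lemma cofork_π_toFun_eq (s : Limits.Cofork (kernelPairFst p) (kernelPairSnd p))
    {b b' : B.carrier} (h : p.toFun b = p.toFun b') : s.π.toFun b = s.π.toFun b' :=
  congrFun (congrArg HHom.toFun s.condition) ⟨(b, b'), h⟩

noncomputable def descOfLiftsRealizers (he : LiftsRealizers p e)
    (s : Limits.Cofork (kernelPairFst p) (kernelPairSnd p)) : A ⟶ s.pt := by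
  refine ⟨s.π.toFun ∘ Function.surjInv he.surjective, ?_⟩
  obtain ⟨t, htbang, htrz⟩ := s.π.tracked
  obtain ⟨c, hcomp⟩ := exists_kap_comp e t
  refine ⟨c, fun k hk => hcomp (he.1 k hk) htbang, fun a k hk => ?_⟩
  obtain ⟨b, hb, hk'⟩ := he.2 a k hk
  have hπ : s.π.toFun b = s.π.toFun (Function.surjInv he.surjective a) :=
    cofork_π_toFun_eq s (hb.trans (Function.surjInv_eq he.surjective a).symm)
  exact hcomp hk' fun y hy => by simpa only [Function.comp_apply, ← hπ] using htrz b y hy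

noncomputable def regularEpiOfLiftsRealizers (he : LiftsRealizers p e) : RegularEpi p where
  W := kernelPairObj p
  left := kernelPairFst p
  right := kernelPairSnd p
  w := HHom.ext' (funext fun y => y.2)
  isColimit := by
    refine Limits.Cofork.IsColimit.mk _ (descOfLiftsRealizers he) (fun s => ?_) fun s m hm => ?_
    · refine HHom.ext' (funext fun b => cofork_π_toFun_eq s ?_)
      exact Function.surjInv_eq he.surjective _
    · refine HHom.ext' (funext fun a => ?_)
      have hma := congrFun (congrArg HHom.toFun hm) (Function.surjInv he.surjective a)
      change m.toFun (p.toFun _) = _ at hma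
      rwa [Function.surjInv_eq he.surjective a] at hma

lemma exists_lift_of_partitioned {P : HAsmObj} (hP : Partitioned P) (he : LiftsRealizers p e)
    (u : P ⟶ A) : ∃ v : P ⟶ B, v ≫ p = u := by
  obtain ⟨t, htbang, htrz⟩ := u.tracked
  let f : ℕ →. ℕ := fun x => (kap t (ofL [x])).bind (kap e)
  have hf : Partrec f :=
    ((partrec_kap t).comp computable_ofL_singleton).bind ((partrec_kap e).comp Computable.snd)
  have hfT : ∀ x ∈ P.real, ∃ z ∈ f x, z ∈ bang B.real := fun x hx =>
    let ⟨y, hy, hyA⟩ := htbang _ (singleton_mem_bang hx)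
    let ⟨z, hz, hzB⟩ := he.1 y hyA
    ⟨z, Part.mem_bind_iff.mpr ⟨y, hy, hz⟩, hzB⟩
  have hlift : ∀ a, ∃ g, P.rz a = upClo P.real {ofL [g]} ∧
      ∃ b, p.toFun b = u.toFun a ∧ ∃ z ∈ f g, z ∈ B.rz b := fun a => by
    obtain ⟨g, hg⟩ := hP a
    obtain ⟨y, hy, hyA⟩ := htrz a _ (HAsmObj.ofL_singleton_mem_rz hg)
    obtain ⟨b, hb, z, hz, hzB⟩ := he.2 _ y hyA
    exact ⟨g, hg, b, hb, z, Part.mem_bind_iff.mpr ⟨y, hy, hz⟩, hzB⟩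
  choose g hg b hb z hz hzB using hlift
  obtain ⟨d, hd⟩ := exists_kap_concat hf
  refine ⟨⟨b, d, fun m hm => ?_, fun a m hm => ?_⟩, HHom.ext' (funext hb)⟩
  · obtain ⟨v, hv, hvB, -⟩ := hd B.real m fun x hx => hfT x (hm x hx)
    exact ⟨v, hv, hvB⟩
  · have hmP : m ∈ bang P.real := P.rz_sub a hm
    obtain ⟨v, hv, hvB, hle⟩ := hd B.real m fun x hx => hfT x (hmP x hx)
    have hga : g a ∈ toL m := (mem_upClo_singleton.mp (hg a ▸ hm)).2
    exact ⟨v, hv, B.rz_up _ _ (hzB a) v hvB (hle _ hga _ (hz a))⟩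

end LiftsRealizers

def cover (P : HAsmObj) : HAsmObj where
  carrier := {x : P.carrier × ℕ // x.2 ∈ P.rz x.1}
  real := bang P.real
  rz x := upClo (bang P.real) {ofL [x.1.2]}
  rz_sub _ := fun _ hn => hn.1
  rz_ne x := ⟨ofL [x.1.2], singleton_mem_bang (P.rz_sub _ x.2), ofL [x.1.2], rfl, sle_refl _⟩
  rz_up _ := upClo_upwardClosedIn _ _

lemma cover_partitioned (P : HAsmObj) : Partitioned (cover P) :=
  fun x => ⟨x.1.2, rfl⟩

/-- Tracked by flattening a list of realizers into one list. -/
def coverProj (P : HAsmObj) : cover P ⟶ P := by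
  refine ⟨fun x => x.1.1, ?_⟩
  obtain ⟨d, hd⟩ := exists_kap_concat Partrec.some
  have hflat : ∀ n ∈ bang (bang P.real), ∃ v ∈ kap d n, v ∈ bang P.real ∧ ∀ m ∈ toL n, sle m v :=
    fun n hn => (hd P.real n fun m hm => ⟨m, Part.mem_some m, hn m hm⟩).imp
      fun _ ⟨hv, hvP, hle⟩ => ⟨hv, hvP, fun m hm => hle m hm m (Part.mem_some m)⟩
  refine ⟨d, fun n hn => (hflat n hn).imp fun _ h => ⟨h.1, h.2.1⟩, fun x n hn => ?_⟩
  obtain ⟨hnbang, hxn⟩ := mem_upClo_singleton.mp hn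
  obtain ⟨v, hv, hvP, hle⟩ := hflat n hnbang
  exact ⟨v, hv, P.rz_up _ _ x.2 v hvP (hle _ hxn)⟩

lemma exists_liftsRealizers_coverProj (P : HAsmObj) : ∃ e, LiftsRealizers (coverProj P) e := by
  obtain ⟨e, he⟩ := exists_kap_eq (Partrec.nat_iff.mp computable_ofL_singleton.partrec)
  have hmem : ∀ k, ofL [k] ∈ kap e k := fun k => (he k).symm ▸ Part.mem_some _
  refine ⟨e, fun k hk => ⟨_, hmem k, singleton_mem_bang hk⟩, fun a k hk => ?_⟩
  exact ⟨⟨(a, k), hk⟩, rfl, _, hmem k, singleton_mem_bang (P.rz_sub a hk), _, rfl, sle_refl _⟩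

/-- an object of `HAsm` is projective with respect to regular epimorphisms
iff it is isomorphic to a partitioned Herbrand assembly. -/
theorem projective_iff_partitioned (P : HAsmObj) :
    (∀ {B A : HAsmObj} (p : B ⟶ A), RegularEpi p → ∀ u : P ⟶ A, ∃ v : P ⟶ B, v ≫ p = u) ↔
    ∃ Q : HAsmObj, Partitioned Q ∧ Nonempty (P ≅ Q) := by
  constructor
  · intro hproj
    obtain ⟨e, he⟩ := exists_liftsRealizers_coverProj P
    obtain ⟨s, hs⟩ := hproj (coverProj P) (regularEpiOfLiftsRealizers he) (𝟙 P)
    exact ⟨_, (cover_partitioned P).comap s.toFun, ⟨HAsmObj.comapIsoOfSection hs⟩⟩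
  · rintro ⟨Q, hQ, ⟨i⟩⟩ B A p hp u
    obtain ⟨e, he⟩ := exists_liftsRealizers_of_regularEpi hp
    obtain ⟨v, hv⟩ := exists_lift_of_partitioned hQ he (i.inv ≫ u)
    exact ⟨i.hom ≫ v, by rw [Category.assoc, hv, i.hom_inv_id_assoc]⟩

end Herbrand
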